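/- arXiv:1911.08669 — 4 statements merged into one kernel-verified Lean document; each statement's English description precedes it below -/
import Mathlib

section
/- There exists a hedonic diversity game with one red agent and one blue agent that admits no Nash stable outcome. -/
namespace S5

/-- Two agents: agent `0` is red, agent `1` is blue. -/
abbrev Agent := Fin 2

def red : Finset Agent := {0}

/-- The fraction of red agents in a coalition. -/
def ratio (C : Finset Agent) : ℚ := ((C ∩ red).card : ℚ) / (C.card : ℚ)

/-- `P` is a partition of the agent set into nonempty coalitions. -/
def IsPartition (P : Finset (Finset Agent)) : Prop :=
  (∀ C ∈ P, C.Nonempty) ∧ ∀ i : Agent, ∃! C, C ∈ P ∧ i ∈ C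

def u : Agent → ℚ → ℚ := fun i x =>
  if i = 0 then x else (if x = 1/2 then 1 else 0)

lemma ratio0 : ratio {0} = 1 := by norm_num [ratio, red]

lemma ratio1 : ratio {1} = 0 := by norm_num [ratio, red]

lemma ratio01 : ratio {0, 1} = 1/2 := by
  have h1 : ({0, 1} : Finset Agent) ∩ red = {0} := by decide
  have h2 : ({0, 1} : Finset Agent).card = 2 := by decide
  rw [ratio, h1, h2]; norm_num

/-- There is a hedonic diversity game with one red and one blue agent
(preferences of each agent given by a weak order, i.e. a total transitive
relation, over ratios) in which every outcome admits an NS-deviation,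
i.e. no outcome is Nash stable. -/
theorem stmt5 :
    ∃ pref : Agent → ℚ → ℚ → Prop,
      (∀ i, IsTotal ℚ (pref i) ∧ IsTrans ℚ (pref i)) ∧
      ∀ P : Finset (Finset Agent), IsPartition P →
        ∃ (i : Agent) (A C : Finset Agent),
          A ∈ P ∧ i ∈ A ∧ (C ∈ P ∨ C = ∅) ∧ i ∉ C ∧
          pref i (ratio (insert i C)) (ratio A) ∧
          ¬ pref i (ratio A) (ratio (insert i C)) := by
  refine ⟨fun i x y => u i y ≤ u i x, fun i => ⟨⟨fun a b => (le_total _ _).symm⟩,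
    ⟨fun a b c h1 h2 => le_trans h2 h1⟩⟩, ?_⟩
  rintro P ⟨hne, huniq⟩
  obtain ⟨A0, ⟨hA0P, h0A0⟩, hu0⟩ := huniq 0
  obtain ⟨A1, ⟨hA1P, h1A1⟩, hu1⟩ := huniq 1
  have key0 : ∀ B : Finset Agent, 0 ∈ B → B = {0} ∨ B = {0, 1} := by decide
  have key1 : ∀ B : Finset Agent, 1 ∈ B → B = {1} ∨ B = {0, 1} := by decide
  rcases key0 A0 h0A0 with h | h
  · -- A0 = {0}; then A1 = {1} and the blue agent deviates to {0}
    have hA1 : A1 = {1} := by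
      rcases key1 A1 h1A1 with h' | h'
      · exact h'
      · exfalso
        have : A1 = A0 := hu0 A1 ⟨hA1P, by rw [h']; decide⟩
        rw [h, h'] at this
        exact absurd this (by decide)
    have hins : insert 1 A0 = {0, 1} := by rw [h]; decide
    refine ⟨1, A1, A0, hA1P, h1A1, Or.inl hA0P, by rw [h]; decide, ?_, ?_⟩
    · rw [hins, hA1, ratio01, ratio1]; norm_num [u]
    · rw [hins, hA1, ratio01, ratio1]; norm_num [u]
  · -- A0 = {0,1}; the red agent deviates to the empty coalition
    have hins : insert 0 (∅ : Finset Agent) = {0} := by decide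
    refine ⟨0, A0, ∅, hA0P, h0A0, Or.inr rfl, by decide, ?_, ?_⟩
    · rw [hins, h, ratio01, ratio0]; norm_num [u]
    · rw [hins, h, ratio01, ratio0]; norm_num [u]

end S5
end

section
/- Every hedonic diversity game admits an individually stable outcome. Concretely: let C₀ consist of min(|B*|,|R*|) agents from B* = {b ∈ B : b weakly prefers ratio 1/2 to ratio 0} and equally many from R* = {r ∈ R : r weakly prefers ratio 1/2 to ratio 1}; then greedily add agents with IS-deviations to C₀ until no agent outside has an IS-deviation to it, obtaining C₁. The partition consisting of C₁ together with singletons for all other agents is individually stable. -/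
/-!
Let `C₀` mix equally many blue and red agents that weakly prefer ratio `1/2` to their
monochromatic ratio, taking all such agents of the scarcer colour, and let agents with an
IS-deviation join it one by one. Members only weakly gain at each step, so the final coalition `D`
is individually rational and the members of `C₀` still weakly prefer it to `1/2`; everybody else
stays alone. Leaving, or joining a singleton of one's own colour, returns one's monochromatic
ratio, and nobody outside `D` can join `D`. Joining a singleton `{j}` of the other colour yields
`1/2`, so both agents prefer `1/2` to their monochromatic ratio; since `j ∉ D`, the deviator
belongs to the scarcer colour, hence to `C₀`, and already weakly prefers `D` to `1/2`.
-/

namespace S6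

/-- The fraction of red agents in a coalition. -/
def ratio {n : ℕ} (red C : Finset (Fin n)) : ℚ := ((C ∩ red).card : ℚ) / (C.card : ℚ)

/-- `P` is a partition of the agent set into nonempty coalitions. -/
def IsPartition {n : ℕ} (P : Finset (Finset (Fin n))) : Prop :=
  (∀ C ∈ P, C.Nonempty) ∧ ∀ i : Fin n, ∃! C, C ∈ P ∧ i ∈ C

/-- No agent `i` has an IS-deviation: a coalition `C ∈ P ∪ {∅}` such that `i`
strictly prefers the ratio of `C ∪ {i}` to that of her own coalition and every
member of `C` weakly prefers the ratio of `C ∪ {i}` to that of `C`. -/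
def IndividuallyStable {n : ℕ} (red : Finset (Fin n)) (pref : Fin n → ℚ → ℚ → Prop)
    (P : Finset (Finset (Fin n))) : Prop :=
  ¬ ∃ (i : Fin n) (A C : Finset (Fin n)),
      A ∈ P ∧ i ∈ A ∧ (C ∈ P ∨ C = ∅) ∧ i ∉ C ∧
      pref i (ratio red (insert i C)) (ratio red A) ∧
      ¬ pref i (ratio red A) (ratio red (insert i C)) ∧
      ∀ j ∈ C, pref j (ratio red (insert i C)) (ratio red C)

theorem exists_saturated_superset {α : Type*} [DecidableEq α] [Fintype α]
    (p : Finset α → Prop) (q : Finset α → α → Prop)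
    (hstep : ∀ C i, p C → i ∉ C → q C i → p (insert i C)) {C : Finset α} (hC : p C) :
    ∃ D, C ⊆ D ∧ p D ∧ ∀ i ∉ D, ¬ q D i := by
  induction C using WellFoundedGT.induction with
  | ind C ih =>
    by_cases h : ∃ i ∉ C, q C i
    · obtain ⟨i, hiC, hqi⟩ := h
      obtain ⟨D, hD, hpD, hsat⟩ := ih _ (Finset.ssubset_insert hiC) (hstep C i hC hiC hqi)
      exact ⟨D, (Finset.subset_insert i C).trans hD, hpD, hsat⟩
    · exact ⟨C, subset_rfl, hC, fun i hi hq => h ⟨i, hi, hq⟩⟩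

variable {n : ℕ}

section Ratio

variable (red : Finset (Fin n))

theorem ratio_of_subset {C : Finset (Fin n)} (hC : C.Nonempty) (h : C ⊆ red) :
    ratio red C = 1 := by
  rw [ratio, Finset.inter_eq_left.2 h]
  exact div_self (by exact_mod_cast hC.card_pos.ne')

theorem ratio_of_disjoint {C : Finset (Fin n)} (h : Disjoint C red) : ratio red C = 0 := by
  simp [ratio, Finset.disjoint_iff_inter_eq_empty.1 h]

theorem ratio_union_of_card_eq {B R : Finset (Fin n)} (hB : Disjoint B red) (hR : R ⊆ red)
    (hcard : B.card = R.card) (hne : (B ∪ R).Nonempty) : ratio red (B ∪ R) = 1 / 2 := by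
  have hBR : Disjoint B R := hB.mono_right hR
  have hinter : (B ∪ R) ∩ red = R := by
    rw [Finset.union_inter_distrib_right, Finset.disjoint_iff_inter_eq_empty.1 hB,
      Finset.inter_eq_left.2 hR, Finset.empty_union]
  have hR0 : (R.card : ℚ) ≠ 0 := by
    have := hne.card_pos
    rw [Finset.card_union_of_disjoint hBR] at this
    exact_mod_cast (show R.card ≠ 0 by omega)
  rw [ratio, hinter, Finset.card_union_of_disjoint hBR, hcard]
  push_cast
  field_simp
  ring

theorem ratio_pair_of_iff {i j : Fin n} (h : i ∈ red ↔ j ∈ red) :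
    ratio red {i, j} = ratio red {i} := by
  by_cases hi : i ∈ red
  · rw [ratio_of_subset red (Finset.insert_nonempty _ _)
        (by simpa [Finset.insert_subset_iff] using ⟨hi, h.1 hi⟩),
      ratio_of_subset red (Finset.singleton_nonempty i) (by simpa using hi)]
  · rw [ratio_of_disjoint red (by simpa [Finset.disjoint_insert_left] using ⟨hi, mt h.2 hi⟩),
      ratio_of_disjoint red (by simpa using hi)]

theorem ratio_pair_of_not_iff {i j : Fin n} (h : ¬(i ∈ red ↔ j ∈ red)) :
    ratio red {i, j} = 1 / 2 := by
  by_cases hi : i ∈ red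
  · have hj : j ∉ red := fun hj => h ⟨fun _ => hj, fun _ => hi⟩
    rw [Finset.pair_comm, Finset.insert_eq]
    exact ratio_union_of_card_eq red (by simpa using hj) (by simpa using hi) rfl (by simp)
  · have hj : j ∈ red := by tauto
    rw [Finset.insert_eq]
    exact ratio_union_of_card_eq red (by simpa using hi) (by simpa using hj) rfl (by simp)

theorem exists_subset_ratio_eq_half (S : Finset (Fin n)) :
    ∃ C ⊆ S, (∀ j ∈ C, ratio red C = 1 / 2) ∧
      ∀ i ∈ S, ∀ j ∈ S, ¬(i ∈ red ↔ j ∈ red) → i ∈ C ∨ j ∈ C := by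
  have hB : Disjoint (S \ red) red := Finset.sdiff_disjoint
  have hR : S ∩ red ⊆ red := Finset.inter_subset_right
  rcases le_total (S \ red).card (S ∩ red).card with hle | hle
  · obtain ⟨R, hRS, hcard⟩ := Finset.exists_subset_card_eq hle
    refine ⟨(S \ red) ∪ R, Finset.union_subset Finset.sdiff_subset
      (hRS.trans Finset.inter_subset_left), fun j hj => ratio_union_of_card_eq red hB
      (hRS.trans hR) hcard.symm ⟨j, hj⟩, fun i hi j hj h => ?_⟩
    by_cases hired : i ∈ red
    · exact .inr (Finset.mem_union_left _ (Finset.mem_sdiff.2 ⟨hj, by tauto⟩))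
    · exact .inl (Finset.mem_union_left _ (Finset.mem_sdiff.2 ⟨hi, hired⟩))
  · obtain ⟨B, hBS, hcard⟩ := Finset.exists_subset_card_eq hle
    refine ⟨B ∪ (S ∩ red), Finset.union_subset (hBS.trans Finset.sdiff_subset)
      Finset.inter_subset_left, fun j hj => ratio_union_of_card_eq red
      (hB.mono_left hBS) hR hcard ⟨j, hj⟩, fun i hi j hj h => ?_⟩
    by_cases hired : i ∈ red
    · exact .inl (Finset.mem_union_right _ (Finset.mem_inter.2 ⟨hi, hired⟩))
    · exact .inr (Finset.mem_union_right _ (Finset.mem_inter.2 ⟨hj, by tauto⟩))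

end Ratio

section Partition

def withSingletons (D : Finset (Fin n)) : Finset (Finset (Fin n)) :=
  ({D} : Finset (Finset (Fin n))).filter Finset.Nonempty ∪ (Finset.univ \ D).image singleton

theorem mem_withSingletons {D X : Finset (Fin n)} :
    X ∈ withSingletons D ↔ (D.Nonempty ∧ X = D) ∨ ∃ j ∉ D, X = {j} := by
  simp only [withSingletons, Finset.mem_union, Finset.mem_filter, Finset.mem_singleton,
    Finset.mem_image, Finset.mem_sdiff, Finset.mem_univ, true_and]
  constructor
  · rintro (⟨rfl, hX⟩ | ⟨j, hj, rfl⟩)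
    exacts [.inl ⟨hX, rfl⟩, .inr ⟨j, hj, rfl⟩]
  · rintro (⟨hD, rfl⟩ | ⟨j, hj, rfl⟩)
    exacts [.inl ⟨rfl, hD⟩, .inr ⟨j, hj, rfl⟩]

theorem eq_of_mem_withSingletons {D A : Finset (Fin n)} {i : Fin n}
    (hA : A ∈ withSingletons D) (hi : i ∈ A) : (A = D ∧ i ∈ D) ∨ (A = {i} ∧ i ∉ D) := by
  rcases mem_withSingletons.1 hA with ⟨-, rfl⟩ | ⟨j, hj, rfl⟩
  · exact .inl ⟨rfl, hi⟩
  · obtain rfl := Finset.mem_singleton.1 hi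
    exact .inr ⟨rfl, hj⟩

theorem isPartition_withSingletons (D : Finset (Fin n)) : IsPartition (withSingletons D) := by
  refine ⟨fun X hX => ?_, fun i => ?_⟩
  · rcases mem_withSingletons.1 hX with ⟨hD, rfl⟩ | ⟨j, -, rfl⟩
    exacts [hD, Finset.singleton_nonempty j]
  by_cases hi : i ∈ D
  · exact ⟨D, ⟨mem_withSingletons.2 (.inl ⟨⟨i, hi⟩, rfl⟩), hi⟩, fun A ⟨hA, hiA⟩ =>
      ((eq_of_mem_withSingletons hA hiA).resolve_right fun h => h.2 hi).1⟩
  · exact ⟨{i}, ⟨mem_withSingletons.2 (.inr ⟨i, hi, rfl⟩), Finset.mem_singleton_self i⟩,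
      fun A ⟨hA, hiA⟩ => ((eq_of_mem_withSingletons hA hiA).resolve_left fun h => hi h.2).1⟩

end Partition

section Stability

variable (red : Finset (Fin n)) (pref : Fin n → ℚ → ℚ → Prop)

def IsDeviation (i : Fin n) (A C : Finset (Fin n)) : Prop :=
  pref i (ratio red (insert i C)) (ratio red A) ∧
    ¬ pref i (ratio red A) (ratio red (insert i C)) ∧
    ∀ j ∈ C, pref j (ratio red (insert i C)) (ratio red C)

def IndividuallyRational (D : Finset (Fin n)) : Prop :=
  ∀ j ∈ D, pref j (ratio red D) (ratio red {j})

/-- `B* ∪ R*` in the paper's notation. -/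
def SeeksHalf (i : Fin n) : Prop :=
  pref i (1 / 2) (ratio red {i})

variable {red pref}

theorem IndividuallyRational.insert (htr : ∀ i, IsTrans ℚ (pref i)) {D : Finset (Fin n)}
    (hD : IndividuallyRational red pref D) {i : Fin n} (hdev : IsDeviation red pref i {i} D) :
    IndividuallyRational red pref (insert i D) := by
  intro j hj
  rcases Finset.mem_insert.1 hj with rfl | hj
  · exact hdev.1
  · exact (htr j).trans _ _ _ (hdev.2.2 j hj) (hD j hj)

theorem seeksHalf_of_isDeviation_pair (htr : ∀ i, IsTrans ℚ (pref i)) {i j : Fin n}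
    {A : Finset (Fin n)} (hdev : IsDeviation red pref i A {j}) (h : ¬(i ∈ red ↔ j ∈ red))
    (hA : pref i (ratio red A) (ratio red {i})) : SeeksHalf red pref i ∧ SeeksHalf red pref j := by
  obtain ⟨hi, -, hj⟩ := hdev
  rw [ratio_pair_of_not_iff red h] at hi hj
  exact ⟨(htr i).trans _ _ _ hi hA, hj j (Finset.mem_singleton_self j)⟩

theorem individuallyStable_withSingletons (hrefl : ∀ i, Std.Refl (pref i))
    (htr : ∀ i, IsTrans ℚ (pref i)) {D : Finset (Fin n)} (hIR : IndividuallyRational red pref D)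
    (hsat : ∀ i ∉ D, ¬ IsDeviation red pref i {i} D)
    (hmixed : ∀ i j, SeeksHalf red pref i → SeeksHalf red pref j → ¬(i ∈ red ↔ j ∈ red) →
      (i ∈ D ∧ pref i (ratio red D) (1 / 2)) ∨ (j ∈ D ∧ pref j (ratio red D) (1 / 2))) :
    IndividuallyStable red pref (withSingletons D) := by
  rintro ⟨i, A, C, hA, hiA, hC, hiC, hdev⟩
  have hown : pref i (ratio red A) (ratio red {i}) := by
    rcases eq_of_mem_withSingletons hA hiA with ⟨rfl, hiD⟩ | ⟨rfl, -⟩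
    exacts [hIR i hiD, (hrefl i).refl _]
  rcases hC with hC | rfl
  · rcases mem_withSingletons.1 hC with ⟨-, rfl⟩ | ⟨j, hjD, rfl⟩
    · rcases eq_of_mem_withSingletons hA hiA with ⟨-, hiD⟩ | ⟨rfl, -⟩
      exacts [hiC hiD, hsat i hiC hdev]
    by_cases hcol : i ∈ red ↔ j ∈ red
    · exact hdev.2.1 (by rwa [ratio_pair_of_iff red hcol])
    obtain ⟨hi, hj⟩ := seeksHalf_of_isDeviation_pair htr hdev hcol hown
    obtain ⟨hiD, hiHalf⟩ := (hmixed i j hi hj hcol).resolve_right fun h => hjD h.1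
    obtain ⟨rfl, -⟩ := (eq_of_mem_withSingletons hA hiA).resolve_right fun h => h.2 hiD
    exact hdev.2.1 (by rw [ratio_pair_of_not_iff red hcol]; exact hiHalf)
  · exact hdev.2.1 (by simpa using hown)

end Stability

/-- Every hedonic diversity game (agents' preferences over coalitions induced
by weak orders over the fraction of red agents) admits an individually stable
outcome. -/
theorem stmt6 (n : ℕ) (red : Finset (Fin n)) (pref : Fin n → ℚ → ℚ → Prop)
    (htot : ∀ i, IsTotal ℚ (pref i)) (htr : ∀ i, IsTrans ℚ (pref i)) :
    ∃ P : Finset (Finset (Fin n)), IsPartition P ∧ IndividuallyStable red pref P := by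
  classical
  have hrefl (i : Fin n) : Std.Refl (pref i) := ⟨fun r => ((htot i).total r r).elim id id⟩
  obtain ⟨C₀, hC₀S, hhalf, hmixed⟩ :=
    exists_subset_ratio_eq_half red (Finset.univ.filter (SeeksHalf red pref))
  obtain ⟨D, -, ⟨hIR, hC₀D⟩, hsat⟩ := exists_saturated_superset
    (fun D => IndividuallyRational red pref D ∧ ∀ j ∈ C₀, j ∈ D ∧ pref j (ratio red D) (1 / 2))
    (fun D i => IsDeviation red pref i {i} D)
    (fun D i ⟨hIR, hC₀D⟩ _ hdev => ⟨hIR.insert htr hdev, fun j hj =>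
      ⟨Finset.mem_insert_of_mem (hC₀D j hj).1,
        (htr j).trans _ _ _ (hdev.2.2 j (hC₀D j hj).1) (hC₀D j hj).2⟩⟩)
    (C := C₀) ⟨fun j hj => hhalf j hj ▸ (Finset.mem_filter.1 (hC₀S hj)).2,
      fun j hj => ⟨hj, hhalf j hj ▸ (hrefl j).refl _⟩⟩
  exact ⟨withSingletons D, isPartition_withSingletons D,
    individuallyStable_withSingletons hrefl htr hIR hsat fun i j hi hj h =>
      (hmixed i (by simpa using hi) j (by simpa using hj) h).imp (hC₀D i) (hC₀D j)⟩

end S6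
end

section
/- In every dichotomous hedonic game, any sequence of IS-deviations starting from the grand coalition converges to an individually stable outcome after at most |N| deviations; in particular, each agent deviates at most once. -/
namespace S8

variable {α : Type*} [Fintype α] [DecidableEq α]

/-- In a dichotomous hedonic game with approval predicate `approve`, agent `i`
performs an IS-deviation turning partition `P` into `P'`: she leaves her
coalition `A` (which she disapproves) and joins `C ∈ P ∪ {∅}`, approving
`C ∪ {i}`, while every member of `C` weakly prefers `C ∪ {i}` to `C`
(dichotomously: if she approves `C` she approves `C ∪ {i}`). -/
def IsStep (approve : α → Finset α → Prop) (P P' : Finset (Finset α)) (i : α) : Prop :=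
  ∃ A C : Finset α, A ∈ P ∧ i ∈ A ∧ (C ∈ P ∨ C = ∅) ∧ i ∉ C ∧
    approve i (insert i C) ∧ ¬ approve i A ∧
    (∀ j ∈ C, approve j C → approve j (insert i C)) ∧
    P' = (((P.erase A).erase C ∪ {A.erase i, insert i C}).filter (· ≠ ∅))

/-- A partition is individually stable if no agent has an IS-deviation. -/
def IndStable (approve : α → Finset α → Prop) (P : Finset (Finset α)) : Prop :=
  ¬ ∃ (i : α) (A C : Finset α), A ∈ P ∧ i ∈ A ∧ (C ∈ P ∨ C = ∅) ∧ i ∉ C ∧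
    approve i (insert i C) ∧ ¬ approve i A ∧
    ∀ j ∈ C, approve j C → approve j (insert i C)

/-- Set of agents who have deviated before time `t`. -/
private def Dset (a : ℕ → α) (t : ℕ) : Finset α := (Finset.range t).image a

/-- Invariant along IS-dynamics from the grand coalition. -/
private structure Inv (approve : α → Finset α → Prop) (a : ℕ → α) (t : ℕ)
    (P : Finset (Finset α)) : Prop where
  nonempty : ∀ B ∈ P, B.Nonempty
  cover : ∀ x : α, ∃ B ∈ P, x ∈ B
  disj : ∀ B ∈ P, ∀ B' ∈ P, B ≠ B' → Disjoint B B'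
  split : ∀ B ∈ P, B = Finset.univ \ Dset a t ∨
      (B ⊆ Dset a t ∧ ∀ j ∈ B, approve j B)

private lemma Dset_succ (a : ℕ → α) (t : ℕ) :
    Dset a (t + 1) = insert (a t) (Dset a t) := by
  simp [Dset, Finset.range_add_one, Finset.image_insert]

private lemma inv_step {approve : α → Finset α → Prop} {a : ℕ → α} {t : ℕ}
    {P P' : Finset (Finset α)} (hI : Inv approve a t P)
    (hs : IsStep approve P P' (a t)) :
    a t ∉ Dset a t ∧ Inv approve a (t + 1) P' := by
  obtain ⟨A, C, hA, hiA, hC, hiC, happ, hnapp, hIS, hP'⟩ := hs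
  set i := a t with hi
  -- A must be the residual coalition
  have hAres : A = Finset.univ \ Dset a t := by
    rcases hI.split A hA with h | ⟨_, h⟩
    · exact h
    · exact absurd (h i hiA) hnapp
  have hfresh : i ∉ Dset a t := by
    have := hiA; rw [hAres] at this; exact (Finset.mem_sdiff.1 this).2
  -- C is an approved coalition inside Dset (or empty)
  have hCD : C ⊆ Dset a t ∧ ∀ j ∈ C, approve j C := by
    rcases hC with hC | hC
    · rcases hI.split C hC with h | h
      · exact absurd hiA (by rw [hAres, ← h]; exact hiC)
      · exact h
    · subst hC; exact ⟨Finset.empty_subset _, by simp⟩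
  have hCA : Disjoint C A := by
    rcases hC with hC | hC
    · exact hI.disj C hC A hA (fun h => hiC (h ▸ hiA))
    · subst hC; exact Finset.disjoint_empty_left _
  have hmem : ∀ B, B ∈ P' ↔
      B ≠ ∅ ∧ ((B ∈ P ∧ B ≠ A ∧ B ≠ C) ∨ B = A.erase i ∨ B = insert i C) := by
    intro B
    rw [hP']
    simp only [Finset.mem_filter, Finset.mem_union, Finset.mem_insert,
      Finset.mem_erase, Finset.mem_singleton]
    tauto
  have hDsucc : Dset a (t + 1) = insert i (Dset a t) := Dset_succ a t
  have hAerase : A.erase i = Finset.univ \ Dset a (t + 1) := by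
    rw [hDsucc, hAres]
    ext x
    simp only [Finset.mem_erase, Finset.mem_sdiff, Finset.mem_univ, Finset.mem_insert,
      true_and]
    tauto
  -- approval of insert i C
  have hinsapp : ∀ j ∈ insert i C, approve j (insert i C) := by
    intro j hj
    rcases Finset.mem_insert.1 hj with h | h
    · exact h ▸ happ
    · exact hIS j h (hCD.2 j h)
  refine ⟨hfresh, ?_, ?_, ?_, ?_⟩
  · -- nonempty
    intro B hB
    exact Finset.nonempty_iff_ne_empty.2 ((hmem B).1 hB).1
  · -- cover
    intro x
    obtain ⟨B, hB, hxB⟩ := hI.cover x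
    by_cases hBC : B = C
    · exact ⟨insert i C, (hmem _).2 ⟨Finset.insert_ne_empty _ _,
        Or.inr (Or.inr rfl)⟩, Finset.mem_insert_of_mem (hBC ▸ hxB)⟩
    by_cases hBA : B = A
    · by_cases hxi : x = i
      · exact ⟨insert i C, (hmem _).2 ⟨Finset.insert_ne_empty _ _,
          Or.inr (Or.inr rfl)⟩, hxi ▸ Finset.mem_insert_self _ _⟩
      · refine ⟨A.erase i, (hmem _).2 ⟨?_, Or.inr (Or.inl rfl)⟩,
          Finset.mem_erase.2 ⟨hxi, hBA ▸ hxB⟩⟩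
        intro h
        have : x ∈ A.erase i := Finset.mem_erase.2 ⟨hxi, hBA ▸ hxB⟩
        simp [h] at this
    · refine ⟨B, (hmem _).2 ⟨?_, Or.inl ⟨hB, hBA, hBC⟩⟩, hxB⟩
      exact Finset.nonempty_iff_ne_empty.1 (hI.nonempty B hB)
  · -- disjoint
    intro B hB B' hB' hne
    obtain ⟨-, h1⟩ := (hmem B).1 hB
    obtain ⟨-, h2⟩ := (hmem B').1 hB'
    have diA : Disjoint (insert i C) (A.erase i) := by
      rw [Finset.disjoint_insert_left]
      exact ⟨Finset.notMem_erase _ _,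
        Finset.disjoint_of_subset_right (Finset.erase_subset _ _) hCA⟩
    have dold : ∀ D ∈ P, D ≠ A → D ≠ C → Disjoint D (insert i C) := by
      intro D hD hDA hDC
      rw [Finset.disjoint_insert_right]
      constructor
      · intro h
        exact (Finset.disjoint_left.1 (hI.disj D hD A hA hDA)) h hiA
      · rcases hC with hC | hC
        · exact hI.disj D hD C hC hDC
        · subst hC; exact Finset.disjoint_empty_right _
    rcases h1 with ⟨hBP, hBA, hBC⟩ | h1 | h1 <;>
      rcases h2 with ⟨hBP', hBA', hBC'⟩ | h2 | h2
    · exact hI.disj B hBP B' hBP' hne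
    · exact h2 ▸ Finset.disjoint_of_subset_right (Finset.erase_subset _ _)
        (hI.disj B hBP A hA hBA)
    · exact h2 ▸ dold B hBP hBA hBC
    · exact h1 ▸ (Finset.disjoint_of_subset_right (Finset.erase_subset _ _)
        (hI.disj B' hBP' A hA hBA')).symm
    · exact absurd (h1.trans h2.symm) hne
    · exact h1 ▸ h2 ▸ diA.symm
    · exact h1 ▸ (dold B' hBP' hBA' hBC').symm
    · exact h1 ▸ h2 ▸ diA
    · exact absurd (h1.trans h2.symm) hne
  · -- split
    intro B hB
    obtain ⟨-, h1⟩ := (hmem B).1 hB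
    rcases h1 with ⟨hBP, hBA, hBC⟩ | h1 | h1
    · rcases hI.split B hBP with h | ⟨h, h'⟩
      · exact absurd (h.trans hAres.symm) hBA
      · refine Or.inr ⟨h.trans ?_, h'⟩
        rw [hDsucc]; exact Finset.subset_insert _ _
    · exact Or.inl (h1.trans hAerase)
    · subst h1
      refine Or.inr ⟨?_, hinsapp⟩
      rw [hDsucc]
      exact Finset.insert_subset_insert _ hCD.1

/-- In a dichotomous hedonic game, along any sequence of IS-deviations starting
from the grand coalition, no agent deviates twice, at most `|N|` deviations can
occur, and once no further deviation is possible the current partition is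
individually stable. -/
theorem stmt8 (approve : α → Finset α → Prop)
    (π : ℕ → Finset (Finset α)) (a : ℕ → α) (T : ℕ)
    (h0 : π 0 = {(Finset.univ : Finset α)})
    (hstep : ∀ t < T, IsStep approve (π t) (π (t + 1)) (a t)) :
    (∀ s < T, ∀ t < T, a s = a t → s = t) ∧
    T ≤ Fintype.card α ∧
    ((¬ ∃ i P', IsStep approve (π T) P' i) → IndStable approve (π T)) := by
  have : Nonempty α := ⟨a 0⟩
  have hInv : ∀ t ≤ T, Inv approve a t (π t) := by
    intro t
    induction t with
    | zero =>
      intro _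
      refine ⟨?_, ?_, ?_, ?_⟩ <;> rw [h0]
      · intro B hB
        rw [Finset.mem_singleton] at hB
        exact hB ▸ Finset.univ_nonempty
      · intro x; exact ⟨Finset.univ, Finset.mem_singleton_self _, Finset.mem_univ x⟩
      · intro B hB B' hB' hne
        rw [Finset.mem_singleton] at hB hB'
        exact absurd (hB.trans hB'.symm) hne
      · intro B hB
        rw [Finset.mem_singleton] at hB
        left
        simp [hB, Dset]
    | succ t ih =>
      intro ht
      have ht' : t < T := Nat.lt_of_succ_le ht
      exact (inv_step (ih ht'.le) (hstep t ht')).2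
  have hfresh : ∀ t < T, a t ∉ Dset a t := fun t ht =>
    (inv_step (hInv t ht.le) (hstep t ht)).1
  have hinj : ∀ s < T, ∀ t < T, a s = a t → s = t := by
    intro s hs t ht heq
    rcases lt_trichotomy s t with h | h | h
    · exact absurd (heq ▸ Finset.mem_image_of_mem a (Finset.mem_range.2 h))
        (hfresh t ht)
    · exact h
    · exact absurd (heq ▸ Finset.mem_image_of_mem a (Finset.mem_range.2 h))
        (hfresh s hs)
  refine ⟨hinj, ?_, ?_⟩
  · have : Function.Injective (fun k : Fin T => a k.val) := by
      intro ⟨s, hs⟩ ⟨t, ht⟩ h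
      exact Fin.ext (hinj s hs t ht h)
    simpa using Fintype.card_le_of_injective _ this
  · intro hno ⟨i, A, C, hA, hiA, hC, hiC, happ, hnapp, hIS⟩
    exact hno ⟨i, _, A, C, hA, hiA, hC, hiC, happ, hnapp, hIS, rfl⟩

end S8
end

section
/- In a dichotomous hedonic game, after any sequence of k ≥ 1 IS-deviations starting from the grand coalition, the set N^(k) of agents who have never deviated forms a single coalition of the current partition, and every agent outside N^(k) approves her current coalition. -/
namespace S9

variable {α : Type*} [Fintype α] [DecidableEq α]

/-- In a dichotomous hedonic game with approval predicate `approve`, agent `i`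
performs an IS-deviation turning partition `P` into `P'`. -/
def IsStep (approve : α → Finset α → Prop) (P P' : Finset (Finset α)) (i : α) : Prop :=
  ∃ A C : Finset α, A ∈ P ∧ i ∈ A ∧ (C ∈ P ∨ C = ∅) ∧ i ∉ C ∧
    approve i (insert i C) ∧ ¬ approve i A ∧
    (∀ j ∈ C, approve j C → approve j (insert i C)) ∧
    P' = (((P.erase A).erase C ∪ {A.erase i, insert i C}).filter (· ≠ ∅))

/-- The full invariant maintained along the deviation sequence. -/
theorem aux9 (approve : α → Finset α → Prop)
    (π : ℕ → Finset (Finset α)) (a : ℕ → α)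
    (h0 : π 0 = {(Finset.univ : Finset α)}) :
    ∀ k, 1 ≤ k → (∀ t < k, IsStep approve (π t) (π (t + 1)) (a t)) →
    (∀ B1 ∈ π k, ∀ B2 ∈ π k, ∀ x, x ∈ B1 → x ∈ B2 → B1 = B2) ∧
    ((∅ : Finset α) ∉ π k) ∧
    (((Finset.univ : Finset α) \ (Finset.range k).image a).Nonempty →
        ((Finset.univ : Finset α) \ (Finset.range k).image a) ∈ π k) ∧
    (∀ i ∈ (Finset.range k).image a, ∃ C ∈ π k, i ∈ C ∧ approve i C) := by
  intro k hk
  induction k, hk using Nat.le_induction with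
  | base =>
    intro hstep
    obtain ⟨A, C, hA, hiA, hC, hiC, happ, hnapp, hmem, hP'⟩ := hstep 0 (by norm_num)
    rw [h0, Finset.mem_singleton] at hA
    subst hA
    have hCempty : C = ∅ := by
      rcases hC with hC | hC
      · rw [h0, Finset.mem_singleton] at hC
        subst hC
        exact absurd (Finset.mem_univ _) hiC
      · exact hC
    subst hCempty
    have hπ1 : π 1 = ({Finset.univ.erase (a 0), {a 0}} : Finset (Finset α)).filter (· ≠ ∅) := by
      rw [hP', h0]
      congr 1
      rw [Finset.erase_singleton]
      simp
    have hD : (Finset.range 1).image a = ({a 0} : Finset α) := by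
      simp
    have hN : (Finset.univ : Finset α) \ (Finset.range 1).image a = Finset.univ.erase (a 0) := by
      rw [hD, ← Finset.erase_eq]
    have hmem1 : ∀ B, B ∈ π 1 ↔ (B = Finset.univ.erase (a 0) ∨ B = {a 0}) ∧ B ≠ ∅ := by
      intro B
      rw [hπ1, Finset.mem_filter, Finset.mem_insert, Finset.mem_singleton]
    refine ⟨?_, ?_, ?_, ?_⟩
    · intro B1 hB1 B2 hB2 x hx1 hx2
      rw [hmem1] at hB1 hB2
      rcases hB1.1 with h1 | h1 <;> rcases hB2.1 with h2 | h2 <;> subst h1 <;> subst h2 <;>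
        first
        | rfl
        | (exfalso; simp only [Finset.mem_erase, Finset.mem_singleton] at hx1 hx2; tauto)
    · intro h
      rw [hmem1] at h
      exact h.2 rfl
    · intro hne
      rw [hN] at hne ⊢
      rw [hmem1]
      exact ⟨Or.inl rfl, Finset.nonempty_iff_ne_empty.mp hne⟩
    · intro i hi
      rw [hD, Finset.mem_singleton] at hi
      subst hi
      refine ⟨{a 0}, ?_, Finset.mem_singleton_self _, by simpa using happ⟩
      rw [hmem1]
      exact ⟨Or.inr rfl, Finset.singleton_ne_empty _⟩
  | succ k hk1 ih =>
    intro hstep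
    obtain ⟨ha, hne, hNmem, hdev⟩ := ih (fun t ht => hstep t (Nat.lt_succ_of_lt ht))
    obtain ⟨A, C, hA, hiA, hC, hiC, happ, hnapp, hmemC, hP'⟩ := hstep k (Nat.lt_succ_self k)
    set i := a k with hidef
    set D := (Finset.range k).image a with hDdef
    set N := (Finset.univ : Finset α) \ D with hNdef
    -- i has not deviated before
    have hiND : i ∉ D := by
      intro hiD
      obtain ⟨Ci, hCi, hiCi, happi⟩ := hdev i hiD
      have : Ci = A := ha Ci hCi A hA i hiCi hiA
      subst this
      exact hnapp happi
    have hiN : i ∈ N := Finset.mem_sdiff.mpr ⟨Finset.mem_univ _, hiND⟩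
    have hNA : N = A := ha N (hNmem ⟨i, hiN⟩) A hA i hiN hiA
    -- new deviator/nondeviator sets
    have hD' : (Finset.range (k + 1)).image a = insert i D := by
      rw [Finset.range_add_one, Finset.image_insert, ← hidef, ← hDdef]
    have hN' : (Finset.univ : Finset α) \ (Finset.range (k + 1)).image a = A.erase i := by
      rw [hD', Finset.sdiff_insert, ← hNdef, hNA]
    -- membership in the new partition
    have hmem' : ∀ B, B ∈ π (k + 1) ↔
        ((B ∈ π k ∧ B ≠ A ∧ B ≠ C) ∨ B = A.erase i ∨ B = insert i C) ∧ B ≠ ∅ := by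
      intro B
      rw [hP', Finset.mem_filter, Finset.mem_union, Finset.mem_erase, Finset.mem_erase,
        Finset.mem_insert, Finset.mem_singleton]
      constructor
      · rintro ⟨h, h2⟩
        refine ⟨?_, h2⟩
        rcases h with ⟨hBC, hBA, hB⟩ | h
        · exact Or.inl ⟨hB, hBA, hBC⟩
        · exact Or.inr h
      · rintro ⟨h, h2⟩
        refine ⟨?_, h2⟩
        rcases h with ⟨hB, hBA, hBC⟩ | h
        · exact Or.inl ⟨hBC, hBA, hB⟩
        · exact Or.inr h
    -- disjointness facts
    have hCA : ∀ x, x ∈ C → x ∈ A → False := by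
      intro x hxC hxA
      rcases hC with hCP | hCe
      · have : C = A := ha C hCP A hA x hxC hxA
        subst this
        exact hiC hiA
      · subst hCe
        exact absurd hxC (Finset.notMem_empty x)
    refine ⟨?_, ?_, ?_, ?_⟩
    · -- unique block
      intro B1 hB1 B2 hB2 x hx1 hx2
      rw [hmem'] at hB1 hB2
      have key : ∀ B, ((B ∈ π k ∧ B ≠ A ∧ B ≠ C) ∨ B = A.erase i ∨ B = insert i C) →
          x ∈ B → (B ∈ π k ∧ B ≠ A ∧ B ≠ C ∧ x ≠ i) ∨ (B = A.erase i ∧ x ∈ A ∧ x ≠ i) ∨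
            (B = insert i C ∧ (x = i ∨ x ∈ C)) := by
        intro B hB hxB
        rcases hB with ⟨hB, hBA, hBC⟩ | hB | hB
        · refine Or.inl ⟨hB, hBA, hBC, ?_⟩
          intro hxi
          exact hBA (ha B hB A hA x hxB (by rw [hxi]; exact hiA))
        · subst hB
          rw [Finset.mem_erase] at hxB
          exact Or.inr (Or.inl ⟨rfl, hxB.2, hxB.1⟩)
        · subst hB
          rw [Finset.mem_insert] at hxB
          exact Or.inr (Or.inr ⟨rfl, hxB⟩)
      rcases key B1 hB1.1 hx1 with h1 | h1 | h1 <;> rcases key B2 hB2.1 hx2 with h2 | h2 | h2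
      · exact ha B1 h1.1 B2 h2.1 x hx1 hx2
      · exact absurd (ha B1 h1.1 A hA x hx1 h2.2.1) h1.2.1
      · rcases h2.2 with h | h
        · exact absurd h h1.2.2.2
        · exact absurd (ha B1 h1.1 C
            (hC.resolve_right (fun hc => absurd (hc ▸ h) (Finset.notMem_empty x)))
            x hx1 h) h1.2.2.1
      · exact absurd (ha B2 h2.1 A hA x hx2 h1.2.1) h2.2.1
      · rw [h1.1, h2.1]
      · rcases h2.2 with h | h
        · exact absurd h h1.2.2
        · exact absurd h1.2.1 (fun hxA => hCA x h hxA)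
      · rcases h1.2 with h | h
        · exact absurd h h2.2.2.2
        · exact absurd (ha B2 h2.1 C
            (hC.resolve_right (fun hc => absurd (hc ▸ h) (Finset.notMem_empty x)))
            x hx2 h) h2.2.2.1
      · rcases h1.2 with h | h
        · exact absurd h h2.2.2
        · exact absurd h2.2.1 (fun hxA => hCA x h hxA)
      · rw [h1.1, h2.1]
    · -- no empty block
      intro h
      rw [hmem'] at h
      exact h.2 rfl
    · -- nondeviators form a block
      intro hne'
      rw [hN'] at hne' ⊢
      rw [hmem']
      exact ⟨Or.inr (Or.inl rfl), Finset.nonempty_iff_ne_empty.mp hne'⟩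
    · -- every deviator approves her block
      intro j hj
      rw [hD', Finset.mem_insert] at hj
      rcases hj with hj | hj
      · refine ⟨insert i C, ?_, ?_, ?_⟩
        · rw [hmem']
          exact ⟨Or.inr (Or.inr rfl), Finset.insert_ne_empty _ _⟩
        · rw [hj]
          exact Finset.mem_insert_self _ _
        · rw [hj]
          exact happ
      · obtain ⟨Cj, hCj, hjCj, happj⟩ := hdev j hj
        have hCjA : Cj ≠ A := by
          intro h
          subst h
          have : j ∈ N := hNA ▸ hjCj
          exact (Finset.mem_sdiff.mp this).2 hj
        by_cases hCjC : Cj = C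
        · subst hCjC
          refine ⟨insert i Cj, ?_, Finset.mem_insert_of_mem hjCj, hmemC j hjCj happj⟩
          rw [hmem']
          exact ⟨Or.inr (Or.inr rfl), Finset.insert_ne_empty _ _⟩
        · refine ⟨Cj, ?_, hjCj, happj⟩
          rw [hmem']
          refine ⟨Or.inl ⟨hCj, hCjA, hCjC⟩, ?_⟩
          intro h
          subst h
          exact absurd hjCj (Finset.notMem_empty j)

/-- After any sequence of `k ≥ 1` IS-deviations starting from the grand
coalition, the set of agents who have never deviated forms (if nonempty) a
single coalition of the current partition, and every agent who has deviated
approves her current coalition. -/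
theorem stmt9 (approve : α → Finset α → Prop)
    (π : ℕ → Finset (Finset α)) (a : ℕ → α) (k : ℕ) (hk : 1 ≤ k)
    (h0 : π 0 = {(Finset.univ : Finset α)})
    (hstep : ∀ t < k, IsStep approve (π t) (π (t + 1)) (a t)) :
    (((Finset.univ : Finset α) \ (Finset.range k).image a).Nonempty →
        ((Finset.univ : Finset α) \ (Finset.range k).image a) ∈ π k) ∧
    (∀ i ∈ (Finset.range k).image a, ∃ C ∈ π k, i ∈ C ∧ approve i C) := by
  obtain ⟨_, _, h3, h4⟩ := aux9 approve π a h0 k hk hstep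
  exact ⟨h3, h4⟩

end S9
end
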